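/- arXiv:2003.00478 — 5 statements merged into one kernel-verified Lean document; each statement's English description precedes it below -/
import Mathlib

section
/- Let C ⊆ ℝⁿ be closed and Clarke regular, let G : C → S⁺ⁿ be a metric on C, let f : ℝⁿ → ℝⁿ, and suppose sup_{x∈C} ‖f(x)‖_{G(x)} < ∞. Fix γ ≥ sup_{x∈C} ‖f(x)‖_{G(x)}. Then for any T > 0, a map x : [0,T] → C is a Carathéodory solution of the projected dynamical system ẋ = Π^G_C[f(x)](x), x ∈ C, if and only if it is a Carathéodory solution of the differential inclusion ẋ ∈ f(x) − {η ∈ N^G_xC : ‖η‖_{G(x)} ≤ γ}, x ∈ C. -/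
open Metric Set Filter Topology MeasureTheory Pointwise
open scoped RealInnerProductSpace

noncomputable section

/-- Euclidean space `ℝⁿ`. -/
abbrev Euc (n : ℕ) := EuclideanSpace ℝ (Fin n)

/-- Continuous linear operators on `ℝⁿ` (playing the role of `n × n` matrices). -/
abbrev EucOp (n : ℕ) := Euc n →L[ℝ] Euc n

variable {n : ℕ}

/-- The set of nearest points of `C` to `x` (the Euclidean projection `P_C(x)`). -/
def projSet (C : Set (Euc n)) (x : Euc n) : Set (Euc n) :=
  {c | c ∈ C ∧ dist x c = Metric.infDist x C}

/-- The (Bouligand) tangent cone to `C` at `x`, via sequences: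
`v = lim (xk - x)/δk` with `xk ∈ C`, `xk → x`, `δk → 0⁺`. -/
def tanCone (C : Set (Euc n)) (x : Euc n) : Set (Euc n) :=
  {v | ∃ (xk : ℕ → Euc n) (δk : ℕ → ℝ),
    (∀ k, xk k ∈ C) ∧ Filter.Tendsto xk Filter.atTop (nhds x) ∧
    (∀ k, 0 < δk k) ∧ Filter.Tendsto δk Filter.atTop (nhds 0) ∧
    Filter.Tendsto (fun k => (δk k)⁻¹ • (xk k - x)) Filter.atTop (nhds v)}

/-- Clarke regularity: sequential inner semicontinuity of the tangent-cone map on `C`. -/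
def ClarkeRegular (C : Set (Euc n)) : Prop :=
  ∀ x ∈ C, ∀ v ∈ tanCone C x, ∀ xk : ℕ → Euc n,
    (∀ k, xk k ∈ C) → Filter.Tendsto xk Filter.atTop (nhds x) →
    ∃ vk : ℕ → Euc n, (∀ k, vk k ∈ tanCone C (xk k)) ∧
      Filter.Tendsto vk Filter.atTop (nhds v)

/-- The Euclidean normal cone `N_xC`, the polar of the tangent cone. -/
def normalCone (C : Set (Euc n)) (x : Euc n) : Set (Euc n) :=
  {η | ∀ v ∈ tanCone C x, ⟪η, v⟫ ≤ 0}

/-- `C` is `α`-prox-regular at `x`: every normal vector at `x` is `α`-proximal. -/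
def ProxRegularAt (C : Set (Euc n)) (α : ℝ) (x : Euc n) : Prop :=
  ∀ η ∈ normalCone C x, ∀ y ∈ C, ⟪η, y - x⟫ ≤ α * ‖η‖ * ‖y - x‖ ^ 2

/-- `C` is `α`-prox-regular: Clarke regular and `α`-prox-regular at every point. -/
def ProxRegular (C : Set (Euc n)) (α : ℝ) : Prop :=
  ClarkeRegular C ∧ ∀ x ∈ C, ProxRegularAt C α x

/-- `G` is a (continuous) metric on `C`: continuous, symmetric, positive definite. -/
def IsMetricOn (C : Set (Euc n)) (G : Euc n → EucOp n) : Prop :=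
  ContinuousOn G C ∧
    ∀ x ∈ C, (∀ u v : Euc n, ⟪G x u, v⟫ = ⟪u, G x v⟫) ∧
      ∀ u : Euc n, u ≠ 0 → 0 < ⟪u, G x u⟫

/-- The inner product `⟨u, v⟩_{G(x)} := uᵀ G(x) v` induced by an operator `Gx`. -/
def innerG (Gx : EucOp n) (u v : Euc n) : ℝ := ⟪u, Gx v⟫

/-- The norm `‖u‖_{G(x)}` induced by an operator `Gx`. -/
def normG (Gx : EucOp n) (u : Euc n) : ℝ := Real.sqrt (innerG Gx u u)

/-- The `G`-normal cone `N^G_xC`. -/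
def normalConeG (C : Set (Euc n)) (G : Euc n → EucOp n) (x : Euc n) : Set (Euc n) :=
  {η | ∀ v ∈ tanCone C x, innerG (G x) η v ≤ 0}

/-- The projection `Π^G_C[w](x)`: minimizers of `‖v - w‖_{G(x)}` over the tangent cone. -/
def projTanG (C : Set (Euc n)) (G : Euc n → EucOp n) (w x : Euc n) : Set (Euc n) :=
  {v | v ∈ tanCone C x ∧ ∀ u ∈ tanCone C x, normG (G x) (v - w) ≤ normG (G x) (u - w)}

/-- The Euclidean projection onto the tangent cone, `Π_C[w](x)` (identity metric). -/
def projTanI (C : Set (Euc n)) (w x : Euc n) : Set (Euc n) :=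
  {v | v ∈ tanCone C x ∧ ∀ u ∈ tanCone C x, ‖v - w‖ ≤ ‖u - w‖}

/-- `z` is a Carathéodory solution of `ż ∈ H(z)`, `z ∈ C`, on `[0,T]`, with (a.e.)
derivative `v`: absolute continuity is encoded by the integral representation. -/
def SolutionVia (H : Euc n → Set (Euc n)) (C : Set (Euc n)) (T : ℝ)
    (z v : ℝ → Euc n) : Prop :=
  (∀ t ∈ Set.Icc (0:ℝ) T, z t ∈ C) ∧
  MeasureTheory.IntegrableOn v (Set.Icc (0:ℝ) T) ∧
  (∀ᵐ t ∂(MeasureTheory.volume.restrict (Set.Icc (0:ℝ) T)), v t ∈ H (z t)) ∧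
  (∀ t ∈ Set.Icc (0:ℝ) T, z t = z 0 + ∫ s in (0:ℝ)..t, v s)

/-- `z` is a Carathéodory solution of `ż ∈ H(z)`, `z ∈ C`, on `[0,T]`. -/
def IsSolutionOn (H : Euc n → Set (Euc n)) (C : Set (Euc n)) (T : ℝ)
    (z : ℝ → Euc n) : Prop :=
  ∃ v : ℝ → Euc n, SolutionVia H C T z v

/-- `z : [0,T'] → ℝⁿ` is a `(T, ε)`-truncated solution of `ż ∈ H(z)`, `z ∈ C`,
with initial condition `z₀`. -/
def IsTruncSol (H : Euc n → Set (Euc n)) (C : Set (Euc n)) (T ε : ℝ) (z₀ : Euc n)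
    (T' : ℝ) (z : ℝ → Euc n) : Prop :=
  0 ≤ T' ∧ T' ≤ T ∧ IsSolutionOn H C T' z ∧ z 0 = z₀ ∧
  (∀ t ∈ Set.Icc (0:ℝ) T', ‖z t - z₀‖ ≤ ε) ∧ (T' = T ∨ ‖z T' - z₀‖ = ε)

/-- A complete solution: a solution on every compact interval `[0,T]`. -/
def IsCompleteSol (H : Euc n → Set (Euc n)) (C : Set (Euc n)) (z : ℝ → Euc n) : Prop :=
  ∀ T : ℝ, 0 ≤ T → IsSolutionOn H C T z

/-- The graph of a map defined on `[0,T']`, as a subset of `ℝ × ℝⁿ`. -/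
def graphOn (T' : ℝ) (z : ℝ → Euc n) : Set (ℝ × Euc n) :=
  {p | p.1 ∈ Set.Icc (0:ℝ) T' ∧ p.2 = z p.1}

/-- Painlevé–Kuratowski convergence of a sequence of sets to `L`:
`L` is contained in the inner limit and contains the outer limit. -/
def KuratowskiTendsto {X : Type*} [TopologicalSpace X] (A : ℕ → Set X) (L : Set X) : Prop :=
  (∀ x ∈ L, ∀ U ∈ nhds x, ∀ᶠ i in Filter.atTop, (A i ∩ U).Nonempty) ∧
  (∀ x : X, (∀ U ∈ nhds x, ∃ᶠ i in Filter.atTop, (A i ∩ U).Nonempty) → x ∈ L)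

/-- The enlarged set `Z°_α := Z + (1/(2α))·int 𝔹` on which the projection is single-valued. -/
def ZballSet (Z : Set (Euc n)) (α : ℝ) : Set (Euc n) :=
  Z + Metric.ball (0 : Euc n) (1 / (2 * α))

/-- The anti-windup approximation vector field
`F_K(z) = f(z, P_Z(z)) − (1/K)·G⁻¹(P_Z(z))(z − P_Z(z))`, as a set-valued map. -/
def AWA (f : Euc n → Euc n → Euc n) (Ginv : Euc n → EucOp n) (Z : Set (Euc n)) (K : ℝ)
    (z : Euc n) : Set (Euc n) :=
  (fun zb => f z zb - K⁻¹ • Ginv zb (z - zb)) '' projSet Z z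

/-- The special anti-windup vector field `F_K(z) = f(P_Z(z)) − (1/K)·G⁻¹(P_Z(z))(z − P_Z(z))`. -/
def AWAspec (f : Euc n → Euc n) (Ginv : Euc n → EucOp n) (Z : Set (Euc n)) (K : ℝ)
    (z : Euc n) : Set (Euc n) :=
  (fun zb => f zb - K⁻¹ • Ginv zb (z - zb)) '' projSet Z z

/-- `Ginv` is a pointwise (two-sided) inverse of `G` on `Z`. -/
def InverseOn (G Ginv : Euc n → EucOp n) (Z : Set (Euc n)) : Prop :=
  ∀ x ∈ Z, (∀ u : Euc n, G x (Ginv x u) = u) ∧ (∀ u : Euc n, Ginv x (G x u) = u)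

/-- A function of class `K∞` on `[0,∞)`. -/
def ClassKInf (ω : ℝ → ℝ) : Prop :=
  ContinuousOn ω (Set.Ici (0:ℝ)) ∧ StrictMonoOn ω (Set.Ici (0:ℝ)) ∧
  (∀ M : ℝ, ∃ r : ℝ, 0 ≤ r ∧ M ≤ ω r) ∧ ω 0 = 0 ∧ ∀ r : ℝ, 0 ≤ r → 0 ≤ ω r

/-- A function of class `KL` on `[0,∞)²`. -/
def ClassKL (β : ℝ → ℝ → ℝ) : Prop :=
  (∀ r s : ℝ, 0 ≤ r → 0 ≤ s → 0 ≤ β r s) ∧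
  (∀ s : ℝ, 0 ≤ s → MonotoneOn (fun r => β r s) (Set.Ici (0:ℝ))) ∧
  (∀ r : ℝ, 0 ≤ r → AntitoneOn (β r) (Set.Ici (0:ℝ))) ∧
  (∀ s : ℝ, 0 ≤ s → Filter.Tendsto (fun r => β r s) (nhdsWithin 0 (Set.Ioi 0)) (nhds 0)) ∧
  (∀ r : ℝ, 0 ≤ r → Filter.Tendsto (β r) Filter.atTop (nhds 0))

/-- The local assumption (Assumption 3.3) at `z₀ ∈ Z` with constants `M, ν, μ, α, ε`. -/
def LocalAssumption (Z : Set (Euc n)) (f : Euc n → Euc n → Euc n) (Ginv : Euc n → EucOp n)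
    (z₀ : Euc n) (M ν μ α ε : ℝ) : Prop :=
  (0 < M ∧ 0 < ν ∧ 0 < μ ∧ 0 < α ∧ 0 < ε) ∧
  (∀ z ∈ Metric.closedBall z₀ ε ∩ ZballSet Z α, ∀ zb ∈ projSet Z z, ‖f z zb‖ ≤ M) ∧
  (∀ z ∈ Metric.closedBall z₀ ε ∩ ZballSet Z α, ∀ zb ∈ projSet Z z, ∀ u : Euc n,
    μ * ‖u‖ ^ 2 ≤ ⟪u, Ginv zb u⟫ ∧ ⟪u, Ginv zb u⟫ ≤ ν * ‖u‖ ^ 2) ∧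
  (∀ x ∈ Metric.closedBall z₀ ε ∩ Z, ProxRegularAt Z α x)

/-- The alternate-form vector field `F̂(z) = f(z, P_Z(z)) − N^G_zZ ∩ γ𝔹` (for `z ∈ Z`). -/
def FhatMap (f : Euc n → Euc n → Euc n) (G : Euc n → EucOp n) (Z : Set (Euc n)) (γ : ℝ)
    (z : Euc n) : Set (Euc n) :=
  (fun η => f z z - η) '' {η | η ∈ normalConeG Z G z ∧ ‖η‖ ≤ γ}

/-- The `σ`-perturbation `H_σ(x) := cl co H((x + σ𝔹) ∩ C) + σ𝔹` of a set-valued map. -/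
def perturbMap (H : Euc n → Set (Euc n)) (C : Set (Euc n)) (σ : ℝ) (x : Euc n) :
    Set (Euc n) :=
  closure (convexHull ℝ (⋃ y ∈ Metric.closedBall x σ ∩ C, H y)) +
    Metric.closedBall (0 : Euc n) σ

end

/-! Clarke regularity makes every tangent cone `T_xC` a convex cone, so the `G`-projection `v` of
`f` onto it leaves a `G`-normal remainder `f - v` with `‖f - v‖_G ≤ ‖f‖_G ≤ γ`. Conversely, along
an absolutely continuous curve in `C` both `ẋ` and `-ẋ` are tangent at almost every time, so a
normal `η` with `ẋ = f - η` is `G`-orthogonal to `ẋ`, and that makes `ẋ` the projection of `f`. -/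

theorem dist_add_smul_eq_mul_norm {E : Type*} [NormedAddCommGroup E] [NormedSpace ℝ E]
    {τ : ℝ} (hτ : 0 < τ) (x u y : E) :
    dist (x + τ • u) y = τ * ‖τ⁻¹ • (y - x) - u‖ := by
  calc dist (x + τ • u) y = ‖τ • (τ⁻¹ • (y - x) - u)‖ := by
        rw [smul_sub, smul_inv_smul₀ hτ.ne', dist_eq_norm, ← norm_neg]
        congr 1
        abel
    _ = τ * ‖τ⁻¹ • (y - x) - u‖ := by rw [norm_smul, Real.norm_eq_abs, abs_of_pos hτ]

section TangentCone

variable {n : ℕ} {C : Set (Euc n)} {x : Euc n}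

theorem mem_tanCone_of_frequently_infDist_lt {u : Euc n} (hx : x ∈ C)
    (h : ∀ ε > 0, ∃ᶠ τ in 𝓝[>] (0 : ℝ), infDist (x + τ • u) C < ε * τ) :
    u ∈ tanCone C x := by
  set ε : ℕ → ℝ := fun k => 1 / ((k : ℝ) + 1)
  have hε : Tendsto ε atTop (𝓝 0) := tendsto_one_div_add_atTop_nhds_zero_nat
  have hεpos : ∀ k, 0 < ε k := fun k => Nat.one_div_pos_of_nat
  choose τ hτ hτC using fun k =>
    ((h (ε k) (hεpos k)).and_eventually (Ioo_mem_nhdsGT (hεpos k))).exists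
  choose y hyC hy using fun k => (infDist_lt_iff ⟨x, hx⟩).1 (hτ k)
  have hquot : ∀ k, ‖(τ k)⁻¹ • (y k - x) - u‖ < ε k := fun k => by
    have := hy k
    rw [dist_add_smul_eq_mul_norm (hτC k).1, mul_comm (ε k)] at this
    exact lt_of_mul_lt_mul_left this (hτC k).1.le
  have hτ0 : Tendsto τ atTop (𝓝 0) :=
    squeeze_zero (fun k => (hτC k).1.le) (fun k => (hτC k).2.le) hε
  have hquot_lim : Tendsto (fun k => (τ k)⁻¹ • (y k - x)) atTop (𝓝 u) :=
    tendsto_iff_norm_sub_tendsto_zero.2 <|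
      squeeze_zero (fun _ => norm_nonneg _) (fun k => (hquot k).le) hε
  have hy_lim : Tendsto y atTop (𝓝 x) := by
    have := (hτ0.smul hquot_lim).add_const x
    rw [zero_smul, zero_add] at this
    refine this.congr fun k => ?_
    rw [smul_inv_smul₀ (hτC k).1.ne', sub_add_cancel]
  exact ⟨y, τ, hyC, hy_lim, fun k => (hτC k).1, hτ0, hquot_lim⟩

theorem frequently_infDist_lt_of_mem_tanCone {w w' : Euc n} {r : ℝ}
    (hw' : w' ∈ tanCone C x) (hr : ‖w - w'‖ < r) :
    ∃ᶠ τ in 𝓝[>] (0 : ℝ), infDist (x + τ • w) C < r * τ := by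
  obtain ⟨xk, δk, hmem, -, hδpos, hδ0, hlim⟩ := hw'
  have hδ : Tendsto δk atTop (𝓝[>] 0) :=
    tendsto_nhdsWithin_iff.2 ⟨hδ0, Eventually.of_forall hδpos⟩
  refine hδ.frequently (Eventually.frequently ?_)
  filter_upwards [(tendsto_iff_norm_sub_tendsto_zero.1 hlim).eventually_lt_const
    (sub_pos.2 hr)] with k hk
  calc infDist (x + δk k • w) C ≤ dist (x + δk k • w) (xk k) := infDist_le_dist_of_mem (hmem k)
    _ = δk k * ‖(δk k)⁻¹ • (xk k - x) - w‖ := dist_add_smul_eq_mul_norm (hδpos k) _ _ _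
    _ < δk k * r := by
        gcongr
        · exact hδpos k
        · calc _ ≤ ‖(δk k)⁻¹ • (xk k - x) - w'‖ + ‖w' - w‖ := norm_sub_le_norm_sub_add_norm_sub _ _ _
            _ < r := by rw [norm_sub_rev w']; linarith
    _ = r * δk k := mul_comm _ _

theorem zero_mem_tanCone (hx : x ∈ C) : (0 : Euc n) ∈ tanCone C x :=
  mem_tanCone_of_frequently_infDist_lt hx fun ε hε => Eventually.frequently <| by
    filter_upwards [self_mem_nhdsWithin] with τ (hτ : 0 < τ)
    simpa [infDist_zero_of_mem hx] using mul_pos hε hτ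

theorem smul_mem_tanCone {v : Euc n} (hv : v ∈ tanCone C x) {c : ℝ} (hc : 0 < c) :
    c • v ∈ tanCone C x := by
  obtain ⟨xk, δk, hmem, hxk, hδpos, hδ0, hlim⟩ := hv
  refine ⟨xk, fun k => δk k / c, hmem, hxk, fun k => div_pos (hδpos k) hc,
    by simpa using hδ0.div_const c, ?_⟩
  refine (hlim.const_smul c).congr fun k => ?_
  dsimp only
  rw [inv_div, div_eq_mul_inv, mul_smul]

theorem ClarkeRegular.exists_near_mem_tanCone (hreg : ClarkeRegular C) (hx : x ∈ C)
    {w : Euc n} (hw : w ∈ tanCone C x) {ε : ℝ} (hε : 0 < ε) :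
    ∃ δ > 0, ∀ p ∈ C, dist p x < δ → ∃ w' ∈ tanCone C p, ‖w - w'‖ < ε := by
  by_contra! hcon
  choose p hpC hpx hfar using fun k : ℕ => hcon (1 / ((k : ℝ) + 1)) Nat.one_div_pos_of_nat
  have hp : Tendsto p atTop (𝓝 x) := tendsto_iff_dist_tendsto_zero.2 <|
    squeeze_zero (fun _ => dist_nonneg) (fun k => (hpx k).le)
      tendsto_one_div_add_atTop_nhds_zero_nat
  obtain ⟨wk, hwk, hlim⟩ := hreg x hx w hw p hpC hp
  obtain ⟨k, hk⟩ := ((tendsto_iff_norm_sub_tendsto_zero.1 hlim).eventually_lt_const hε).exists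
  exact (hfar k (wk k) (hwk k)).not_gt (by rwa [norm_sub_rev])

/-- A comparison argument: the right Dini derivative of `s ↦ d(p + s • w, C)` is at most `ε`, as
one may move from a nearest point of `C` along a tangent vector `ε`-close to `w`. -/
theorem infDist_add_smul_le (hC : IsClosed C) {w : Euc n} {ε δ : ℝ}
    (hnear : ∀ q ∈ C, dist q x < δ → ∃ w' ∈ tanCone C q, ‖w - w'‖ < ε)
    {p : Euc n} (hp : p ∈ C) {t : ℝ} (ht : 0 ≤ t) (hbudget : dist p x + 2 * t * ‖w‖ < δ) :
    infDist (p + t • w) C ≤ ε * t := by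
  refine image_le_of_liminf_slope_right_le_deriv_boundary
    (f := fun s => infDist (p + s • w) C) (B' := fun _ => ε)
    ((continuous_infDist_pt C).comp (by fun_prop)).continuousOn
    (by simp [infDist_zero_of_mem hp]) (by fun_prop)
    (fun s _ => by simpa using ((hasDerivAt_id s).const_mul ε).hasDerivWithinAt) ?_ ⟨ht, le_rfl⟩
  intro s hs r hr
  obtain ⟨q, hq, hdist⟩ := hC.exists_infDist_eq_dist ⟨p, hp⟩ (p + s • w)
  have hqx : dist q x < δ := by
    have hfar : infDist (p + s • w) C ≤ s * ‖w‖ := by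
      simpa [dist_eq_norm, norm_smul, abs_of_nonneg hs.1] using
        infDist_le_dist_of_mem (x := p + s • w) hp
    have hpath : dist (p + s • w) p = s * ‖w‖ := by
      simp [dist_eq_norm, norm_smul, abs_of_nonneg hs.1]
    have := dist_triangle4 q (p + s • w) p x
    rw [dist_comm q (p + s • w), ← hdist, hpath] at this
    nlinarith [hs.2.le, norm_nonneg w]
  obtain ⟨w', hw', hww'⟩ := hnear q hq hqx
  have hshift : Tendsto (fun τ => s + τ) (𝓝[>] 0) (𝓝[>] s) :=
    tendsto_nhdsWithin_iff.2 ⟨((continuous_const_add s).tendsto' 0 s (add_zero s)).mono_left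
      nhdsWithin_le_nhds, eventually_mem_nhdsWithin.mono fun τ hτ => lt_add_of_pos_right s hτ⟩
  refine hshift.frequently <| (frequently_infDist_lt_of_mem_tanCone hw' (hww'.trans hr)).mp <|
    eventually_mem_nhdsWithin.mono fun τ (hτ : 0 < τ) hlt => ?_
  have hstep : infDist (p + (s + τ) • w) C ≤ infDist (q + τ • w) C + infDist (p + s • w) C := by
    calc _ ≤ infDist (q + τ • w) C + dist (p + (s + τ) • w) (q + τ • w) :=
          infDist_le_infDist_add_dist
      _ = _ := by
          rw [hdist, dist_eq_norm, dist_eq_norm]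
          congr 2
          module
  rw [slope_def_field, add_sub_cancel_left, div_lt_iff₀ hτ]
  linarith

theorem add_mem_tanCone (hC : IsClosed C) (hreg : ClarkeRegular C) (hx : x ∈ C) {v w : Euc n}
    (hv : v ∈ tanCone C x) (hw : w ∈ tanCone C x) : v + w ∈ tanCone C x := by
  refine mem_tanCone_of_frequently_infDist_lt hx fun ε hε => ?_
  obtain ⟨δ, hδ, hnear⟩ := hreg.exists_near_mem_tanCone hx hw (by positivity : 0 < ε / 3)
  have hsmall : ∀ᶠ τ in 𝓝[>] (0 : ℝ), τ * (‖v‖ + ε / 3 + 2 * ‖w‖) < δ := by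
    refine ((tendsto_id.mul_const _).mono_left nhdsWithin_le_nhds).eventually_lt_const ?_
    simpa using hδ
  have hv_close := frequently_infDist_lt_of_mem_tanCone (w := v) hv (r := ε / 3)
    (by simpa using hε)
  refine (hv_close.and_eventually (hsmall.and self_mem_nhdsWithin)).mono
    fun τ ⟨hτv, hτδ, (hτ : 0 < τ)⟩ => ?_
  obtain ⟨p, hp, hpdist⟩ := (infDist_lt_iff ⟨x, hx⟩).1 hτv
  have hpx : dist p x + 2 * τ * ‖w‖ < δ := by
    have h1 := dist_triangle p (x + τ • v) x
    have h2 : dist (x + τ • v) x = τ * ‖v‖ := by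
      simp [dist_eq_norm, norm_smul, abs_of_pos hτ]
    rw [dist_comm p (x + τ • v)] at h1
    nlinarith
  calc infDist (x + τ • (v + w)) C
      ≤ infDist (p + τ • w) C + dist (x + τ • (v + w)) (p + τ • w) := infDist_le_infDist_add_dist
    _ = infDist (p + τ • w) C + dist (x + τ • v) p := by
        rw [dist_eq_norm, dist_eq_norm]
        congr 2
        module
    _ < ε / 3 * τ + ε / 3 * τ := add_lt_add_of_le_of_lt
        (infDist_add_smul_le hC hnear hp hτ.le hpx) hpdist
    _ ≤ ε * τ := by nlinarith

end TangentCone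

section Solutions

variable {n : ℕ} {C : Set (Euc n)}

theorem mem_tanCone_of_tendsto {x u : Euc n} {y : ℝ → Euc n} (hx : x ∈ C)
    (hy : ∀ᶠ τ in 𝓝[>] 0, y τ ∈ C) (hlim : Tendsto (fun τ => τ⁻¹ • (y τ - x)) (𝓝[>] 0) (𝓝 u)) :
    u ∈ tanCone C x :=
  mem_tanCone_of_frequently_infDist_lt hx fun ε hε => Eventually.frequently <| by
    filter_upwards [hy, (tendsto_iff_norm_sub_tendsto_zero.1 hlim).eventually_lt_const hε,
      self_mem_nhdsWithin] with τ hyC hτu (hτ : 0 < τ)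
    calc infDist (x + τ • u) C ≤ dist (x + τ • u) (y τ) := infDist_le_dist_of_mem hyC
      _ = τ * ‖τ⁻¹ • (y τ - x) - u‖ := dist_add_smul_eq_mul_norm hτ _ _ _
      _ < τ * ε := mul_lt_mul_of_pos_left hτu hτ
      _ = ε * τ := mul_comm _ _

theorem HasDerivAt.mem_tanCone {γ : ℝ → Euc n} {w : Euc n} {t : ℝ} (hγ : HasDerivAt γ w t)
    (hC : ∀ᶠ s in 𝓝 t, γ s ∈ C) : w ∈ tanCone C (γ t) ∧ -w ∈ tanCone C (γ t) := by
  have hslope := hasDerivAt_iff_tendsto_slope_zero.1 hγ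
  have hγt : γ t ∈ C := hC.self_of_nhds
  have hright : Tendsto (fun τ => t + τ) (𝓝[>] 0) (𝓝 t) :=
    ((continuous_const_add t).tendsto' 0 t (add_zero t)).mono_left nhdsWithin_le_nhds
  have hleft : Tendsto (fun τ => t - τ) (𝓝[>] 0) (𝓝 t) :=
    ((continuous_const.sub continuous_id).tendsto' 0 t (sub_zero t)).mono_left nhdsWithin_le_nhds
  have hneg : Tendsto Neg.neg (𝓝[>] (0 : ℝ)) (𝓝[≠] 0) :=
    tendsto_nhdsWithin_iff.2 ⟨(continuous_neg.tendsto' 0 0 neg_zero).mono_left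
      nhdsWithin_le_nhds, eventually_mem_nhdsWithin.mono fun τ hτ => neg_ne_zero.2 (ne_of_gt hτ)⟩
  refine ⟨mem_tanCone_of_tendsto hγt (hright.eventually hC)
    (hslope.mono_left (nhdsGT_le_nhdsNE 0)), mem_tanCone_of_tendsto hγt (hleft.eventually hC)
    ((hslope.comp hneg).neg.congr fun τ => ?_)⟩
  simp [sub_eq_add_neg]
  abel

theorem SolutionVia.mono_ae {H H' : Euc n → Set (Euc n)} {T : ℝ} {z v : ℝ → Euc n}
    (h : SolutionVia H C T z v)
    (hH : ∀ᵐ t ∂volume.restrict (Icc 0 T), v t ∈ H (z t) → v t ∈ H' (z t)) :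
    SolutionVia H' C T z v :=
  ⟨h.1, h.2.1, by filter_upwards [h.2.2.1, hH] with t hv hvH using hvH hv, h.2.2.2⟩

/-- Lebesgue's differentiation theorem makes `v t` the derivative of `z` at almost every interior
time, and a curve staying in `C` can only move along directions `±ż` of the tangent cone. -/
theorem SolutionVia.ae_mem_tanCone {H : Euc n → Set (Euc n)} {T : ℝ} {z v : ℝ → Euc n}
    (h : SolutionVia H C T z v) :
    ∀ᵐ t ∂volume.restrict (Icc 0 T), v t ∈ tanCone C (z t) ∧ -v t ∈ tanCone C (z t) := by
  obtain ⟨hzC, hint, -, hrep⟩ := h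
  rcases lt_or_ge T 0 with hT | hT
  · simp [Icc_eq_empty_of_lt hT]
  have hderiv := ((intervalIntegrable_iff_integrableOn_Icc_of_le hT).2 hint).ae_hasDerivAt_integral
  rw [← Measure.restrict_congr_set Ioo_ae_eq_Icc]
  filter_upwards [ae_restrict_of_ae hderiv, ae_restrict_mem measurableSet_Ioo] with t ht htT
  have hIcc : Icc 0 T ∈ 𝓝 t := Icc_mem_nhds htT.1 htT.2
  refine HasDerivAt.mem_tanCone ?_ (mem_of_superset hIcc fun s hs => hzC s hs)
  have htI : t ∈ uIcc 0 T := by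
    rw [uIcc_of_le hT]
    exact Ioo_subset_Icc_self htT
  have := (ht htI 0 left_mem_uIcc).const_add (z 0)
  exact this.congr_of_eventuallyEq (eventually_of_mem hIcc hrep)

end Solutions

section MetricProjection

variable {n : ℕ}

theorem innerG_self_nonneg {Gx : EucOp n} (hpos : ∀ u : Euc n, u ≠ 0 → 0 < ⟪u, Gx u⟫)
    (u : Euc n) : 0 ≤ innerG Gx u u := by
  rcases eq_or_ne u 0 with rfl | hu
  · simp [innerG]
  · exact (hpos u hu).le

theorem normG_le_normG_iff {Gx : EucOp n} (hpos : ∀ u : Euc n, u ≠ 0 → 0 < ⟪u, Gx u⟫)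
    {u v : Euc n} : normG Gx u ≤ normG Gx v ↔ innerG Gx u u ≤ innerG Gx v v :=
  Real.sqrt_le_sqrt_iff (innerG_self_nonneg hpos v)

theorem normG_sub_comm (Gx : EucOp n) (u v : Euc n) : normG Gx (u - v) = normG Gx (v - u) := by
  rw [← neg_sub, normG, normG, innerG, innerG, map_neg, inner_neg_neg]

theorem innerG_comm {Gx : EucOp n} (hsym : ∀ u v : Euc n, ⟪Gx u, v⟫ = ⟪u, Gx v⟫)
    (u v : Euc n) : innerG Gx u v = innerG Gx v u := by
  rw [innerG, innerG, ← hsym, real_inner_comm]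

theorem innerG_add_add_self {Gx : EucOp n} (hsym : ∀ u v : Euc n, ⟪Gx u, v⟫ = ⟪u, Gx v⟫)
    (u v : Euc n) :
    innerG Gx (u + v) (u + v) = innerG Gx u u + 2 * innerG Gx u v + innerG Gx v v := by
  have h := innerG_comm hsym v u
  simp only [innerG, map_add, inner_add_left, inner_add_right] at h ⊢
  linarith

variable {C : Set (Euc n)} {G : Euc n → EucOp n} {x w : Euc n}

/-- First-order optimality of `v`: the competitors `v + s • u`, `s > 0`, stay in the convex
cone `T_xC`. -/
theorem sub_mem_normalConeG_of_mem_projTanG (hC : IsClosed C) (hreg : ClarkeRegular C)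
    (hx : x ∈ C) (hsym : ∀ u v : Euc n, ⟪G x u, v⟫ = ⟪u, G x v⟫)
    (hpos : ∀ u : Euc n, u ≠ 0 → 0 < ⟪u, G x u⟫) {v : Euc n} (hv : v ∈ projTanG C G w x) :
    w - v ∈ normalConeG C G x := by
  intro u hu
  have hdir : ∀ s > 0, 0 ≤ 2 * innerG (G x) (v - w) u + s * innerG (G x) u u := by
    intro s hs
    have hmin := (normG_le_normG_iff hpos).1
      (hv.2 _ (add_mem_tanCone hC hreg hx hv.1 (smul_mem_tanCone hu hs)))
    rw [show v + s • u - w = (v - w) + s • u by abel, innerG_add_add_self hsym] at hmin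
    simp only [innerG, map_smul, inner_smul_left, inner_smul_right, RCLike.conj_to_real] at hmin ⊢
    nlinarith
  have hlim : Tendsto (fun s => 2 * innerG (G x) (v - w) u + s * innerG (G x) u u) (𝓝[>] 0)
      (𝓝 (2 * innerG (G x) (v - w) u)) :=
    (Continuous.tendsto' (by fun_prop) 0 _ (by simp)).mono_left nhdsWithin_le_nhds
  have := ge_of_tendsto hlim (eventually_mem_nhdsWithin.mono hdir)
  calc innerG (G x) (w - v) u = -innerG (G x) (v - w) u := by
        rw [← neg_sub, innerG, innerG, inner_neg_left]
    _ ≤ 0 := by linarith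

theorem mem_image_sub_normalConeG_of_mem_projTanG (hC : IsClosed C) (hreg : ClarkeRegular C)
    (hx : x ∈ C) (hsym : ∀ u v : Euc n, ⟪G x u, v⟫ = ⟪u, G x v⟫)
    (hpos : ∀ u : Euc n, u ≠ 0 → 0 < ⟪u, G x u⟫) {γ : ℝ} (hw : normG (G x) w ≤ γ) {v : Euc n}
    (hv : v ∈ projTanG C G w x) :
    v ∈ (fun η => w - η) '' {η | η ∈ normalConeG C G x ∧ normG (G x) η ≤ γ} := by
  refine ⟨w - v, ⟨sub_mem_normalConeG_of_mem_projTanG hC hreg hx hsym hpos hv, ?_⟩,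
    sub_sub_cancel w v⟩
  calc normG (G x) (w - v) = normG (G x) (v - w) := normG_sub_comm _ _ _
    _ ≤ normG (G x) (0 - w) := hv.2 0 (zero_mem_tanCone hx)
    _ = normG (G x) w := by rw [normG_sub_comm, sub_zero]
    _ ≤ γ := hw

/-- When both `±v` are tangent, a normal `η` is `G`-orthogonal to `v`, so `w - η` is the
`G`-projection of `w` onto `T_xC`. -/
theorem mem_projTanG_of_mem_image_sub_normalConeG (hsym : ∀ u v : Euc n, ⟪G x u, v⟫ = ⟪u, G x v⟫)
    (hpos : ∀ u : Euc n, u ≠ 0 → 0 < ⟪u, G x u⟫) {P : Euc n → Prop} {v : Euc n}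
    (hv : v ∈ (fun η => w - η) '' {η | η ∈ normalConeG C G x ∧ P η})
    (htan : v ∈ tanCone C x) (htan' : -v ∈ tanCone C x) : v ∈ projTanG C G w x := by
  obtain ⟨η, ⟨hη, -⟩, rfl⟩ := hv
  refine ⟨htan, fun u hu => (normG_le_normG_iff hpos).2 ?_⟩
  have hηv : 0 ≤ innerG (G x) η (w - η) := by
    have := hη _ htan'
    simp only [innerG, map_neg, inner_neg_right] at this ⊢
    linarith
  have hcross : innerG (G x) (u - (w - η)) η ≤ 0 := by
    have hηu := hη u hu
    rw [innerG_comm hsym]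
    simp only [innerG, map_sub, inner_sub_right] at hηu hηv ⊢
    linarith
  have hneg : ∀ a b : Euc n, innerG (G x) a (-b) = -innerG (G x) a b := fun a b => by
    simp only [innerG, map_neg, inner_neg_right]
  rw [show u - w = (u - (w - η)) + -η by abel, show w - η - w = -η by abel,
    innerG_add_add_self hsym, hneg (u - (w - η)) η]
  linarith [innerG_self_nonneg hpos (u - (w - η))]

end MetricProjection

/-- cf. Prop. 2.7: equivalence of Carathéodory solutions of the projected
dynamical system and of the differential inclusion with `γ`-truncated `G`-normal cone. -/
theorem stmt2 {n : ℕ} (C : Set (Euc n)) (hC : IsClosed C) (hreg : ClarkeRegular C)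
    (G : Euc n → EucOp n) (hG : IsMetricOn C G) (f : Euc n → Euc n) (γ : ℝ)
    (hγ : ∀ x ∈ C, normG (G x) (f x) ≤ γ) :
    ∀ T : ℝ, 0 < T → ∀ z : ℝ → Euc n,
      IsSolutionOn (fun x => projTanG C G (f x) x) C T z ↔
      IsSolutionOn
        (fun x => (fun η => f x - η) ''
          {η | η ∈ normalConeG C G x ∧ normG (G x) η ≤ γ}) C T z := by
  intro T _ z
  constructor
  · rintro ⟨v, hv⟩
    refine ⟨v, hv.mono_ae ?_⟩
    filter_upwards [ae_restrict_mem measurableSet_Icc] with t ht hproj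
    have hzt := hv.1 t ht
    exact mem_image_sub_normalConeG_of_mem_projTanG hC hreg hzt (hG.2 _ hzt).1 (hG.2 _ hzt).2
      (hγ _ hzt) hproj
  · rintro ⟨v, hv⟩
    refine ⟨v, hv.mono_ae ?_⟩
    filter_upwards [ae_restrict_mem measurableSet_Icc, hv.ae_mem_tanCone] with t ht htan hnormal
    have hzt := hv.1 t ht
    exact mem_projTanG_of_mem_image_sub_normalConeG (hG.2 _ hzt).1 (hG.2 _ hzt).2 hnormal
      htan.1 htan.2
end

section
/- Let C ⊆ ℝⁿ be closed and Clarke regular, let f : ℝⁿ → ℝⁿ be continuous, let G : C → S⁺ⁿ be a continuous metric on C, and let γ > 0. Then the inclusion ẋ ∈ F(x) := f(x) − N^G_xC ∩ γ𝔹, x ∈ C, is well-posed: the set-valued map F is outer semicontinuous and locally bounded relative to C, and F(x) is nonempty and convex for every x ∈ C. -/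
open Metric Set Filter Topology MeasureTheory Pointwise
open scoped RealInnerProductSpace

/-- cf. Lemma 2.8: well-posedness of the inclusion
`ẋ ∈ F(x) = f(x) − N^G_xC ∩ γ𝔹`, `x ∈ C`. -/
theorem stmt3 {n : ℕ} (C : Set (Euc n)) (hC : IsClosed C) (hreg : ClarkeRegular C)
    (f : Euc n → Euc n) (hf : Continuous f)
    (G : Euc n → EucOp n) (hG : IsMetricOn C G) (γ : ℝ) (hγ : 0 < γ) :
    IsClosed {p : Euc n × Euc n |
      p.1 ∈ C ∧ p.2 ∈ (fun η => f p.1 - η) '' {η | η ∈ normalConeG C G p.1 ∧ ‖η‖ ≤ γ}} ∧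
    (∀ x ∈ C, ∃ U ∈ nhds x, Bornology.IsBounded
      (⋃ y ∈ U ∩ C, (fun η => f y - η) '' {η | η ∈ normalConeG C G y ∧ ‖η‖ ≤ γ})) ∧
    (∀ x ∈ C,
      ((fun η => f x - η) '' {η | η ∈ normalConeG C G x ∧ ‖η‖ ≤ γ}).Nonempty ∧
      Convex ℝ ((fun η => f x - η) '' {η | η ∈ normalConeG C G x ∧ ‖η‖ ≤ γ})) := by
  refine ⟨?_, ?_, ?_⟩
  · -- osc: closed graph
    apply IsSeqClosed.isClosed
    intro pk p hp hlim
    have hx1 : Filter.Tendsto (fun k => (pk k).1) Filter.atTop (nhds p.1) :=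
      (continuous_fst.tendsto p).comp hlim
    have hx2 : Filter.Tendsto (fun k => (pk k).2) Filter.atTop (nhds p.2) :=
      (continuous_snd.tendsto p).comp hlim
    have hmemC : ∀ k, (pk k).1 ∈ C := fun k => (hp k).1
    have hpC : p.1 ∈ C := hC.mem_of_tendsto hx1 (Filter.Eventually.of_forall hmemC)
    choose η hη heq using fun k => (hp k).2
    have hηeq : ∀ k, η k = f (pk k).1 - (pk k).2 := by
      intro k
      have h := heq k
      simp only at h
      rw [← h]; abel
    have hηt : Filter.Tendsto η Filter.atTop (nhds (f p.1 - p.2)) := by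
      have h : Filter.Tendsto (fun k => f (pk k).1 - (pk k).2) Filter.atTop
          (nhds (f p.1 - p.2)) := ((hf.tendsto p.1).comp hx1).sub hx2
      simpa only [← hηeq] using h
    refine ⟨hpC, f p.1 - p.2, ⟨?_, ?_⟩, sub_sub_cancel _ _⟩
    · -- normal cone membership via Clarke regularity
      intro v hv
      obtain ⟨vk, hvk, hvkt⟩ := hreg p.1 hpC v hv (fun k => (pk k).1) hmemC hx1
      have hGt : Filter.Tendsto (fun k => G (pk k).1) Filter.atTop (nhds (G p.1)) := by
        have hx1' : Filter.Tendsto (fun k => (pk k).1) Filter.atTop (nhdsWithin p.1 C) :=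
          tendsto_nhdsWithin_of_tendsto_nhds_of_eventually_within _ hx1
            (Filter.Eventually.of_forall hmemC)
        exact ((hG.1 p.1 hpC).tendsto).comp hx1'
      have happ : Filter.Tendsto (fun k => G (pk k).1 (vk k)) Filter.atTop
          (nhds (G p.1 v)) :=
        (isBoundedBilinearMap_apply.continuous.tendsto (G p.1, v)).comp
          (hGt.prodMk_nhds hvkt)
      have hinner : Filter.Tendsto (fun k => ⟪η k, G (pk k).1 (vk k)⟫) Filter.atTop
          (nhds ⟪f p.1 - p.2, G p.1 v⟫) := hηt.inner happ
      have hle : ∀ k, ⟪η k, G (pk k).1 (vk k)⟫ ≤ 0 := fun k =>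
        (hη k).1 (vk k) (hvk k)
      exact le_of_tendsto hinner (Filter.Eventually.of_forall hle)
    · exact le_of_tendsto hηt.norm (Filter.Eventually.of_forall fun k => (hη k).2)
  · -- local boundedness
    intro x hx
    refine ⟨Metric.ball x 1, Metric.ball_mem_nhds x one_pos, ?_⟩
    obtain ⟨R, hR⟩ : ∃ R, ∀ y ∈ Metric.closedBall x 1, ‖f y‖ ≤ R := by
      have hcomp : IsCompact (f '' Metric.closedBall x 1) :=
        (isCompact_closedBall x 1).image hf
      obtain ⟨R, hR⟩ := hcomp.isBounded.exists_norm_le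
      exact ⟨R, fun y hy => hR _ (Set.mem_image_of_mem f hy)⟩
    rw [Metric.isBounded_iff_subset_closedBall 0]
    refine ⟨R + γ, ?_⟩
    rintro w hw
    simp only [Set.mem_iUnion] at hw
    obtain ⟨y, ⟨hy1, _⟩, ηv, ⟨_, hηγ⟩, rfl⟩ := hw
    have hb : ‖f y - ηv‖ ≤ R + γ := by
      calc ‖f y - ηv‖ ≤ ‖f y‖ + ‖ηv‖ := norm_sub_le _ _
        _ ≤ R + γ := add_le_add (hR y (Metric.ball_subset_closedBall hy1)) hηγ
    simpa [Metric.mem_closedBall, dist_eq_norm] using hb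
  · -- nonempty and convex
    intro x hx
    constructor
    · exact ⟨f x - 0, ⟨0, ⟨fun v _ => by simp [innerG], by simp [hγ.le]⟩, rfl⟩⟩
    · have hconvS : Convex ℝ {η : Euc n | η ∈ normalConeG C G x ∧ ‖η‖ ≤ γ} := by
        intro a ha b hb s t hs ht hst
        refine ⟨fun v hv => ?_, ?_⟩
        · have h1 := ha.1 v hv
          have h2 := hb.1 v hv
          have he : innerG (G x) (s • a + t • b) v
              = s * innerG (G x) a v + t * innerG (G x) b v := by
            simp [innerG, inner_add_left, inner_smul_left]
          rw [he]
          nlinarith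
        · calc ‖s • a + t • b‖ ≤ ‖s • a‖ + ‖t • b‖ := norm_add_le _ _
            _ = s * ‖a‖ + t * ‖b‖ := by rw [norm_smul, norm_smul,
                Real.norm_of_nonneg hs, Real.norm_of_nonneg ht]
            _ ≤ s * γ + t * γ := by
                have := ha.2; have := hb.2; nlinarith
            _ = γ := by rw [← add_mul, hst, one_mul]
      rintro w1 ⟨η1, h1, rfl⟩ w2 ⟨η2, h2, rfl⟩ s t hs ht hst
      refine ⟨s • η1 + t • η2, hconvS h1 h2 hs ht hst, ?_⟩
      have he : s • (f x - η1) + t • (f x - η2) = (s + t) • f x - (s • η1 + t • η2) := by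
        module
      rw [hst, one_smul] at he
      exact he.symm
end

section
/- For every function ω of class K∞ there exist functions σ₁, σ₂ of class K∞ such that ω(r·s) ≤ σ₁(r)·σ₂(s) for all r, s ≥ 0. -/
open Metric Set Filter Topology MeasureTheory Pointwise
open scoped RealInnerProductSpace

/-!
For `r, s ≤ 1`, `ω (r s) ≤ min (ω r) (ω s) ≤ √(ω r) √(ω s)`; for `r ≥ s ≥ 1`, `ω (r s) ≤ ω (r²)`.
In the mixed case `s ≤ 1 ≤ r`, either `r² s ≤ 1`, and then `r s ≤ √s`, or `√s ≥ 1 / r`, and then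
`ω (r s) ≤ ω r = (ω r / ω (1 / r)) · ω (1 / r) ≤ (ω r / ω (1 / r)) · ω (√s)`.
So `σ₁ = σ₂` can be any `K∞` function dominating `r`, `√(ω r)`, `ω (√r)`, `ω (r²)` and
`ω r / ω (1 / r)`; the last one is `K∞` because `ω (1 / r) ≥ ω 1 > 0` for `r ≤ 1`.
-/

-- At `r = 0` the last summand is the junk value `0 / ω 0⁻¹ = 0`, as it should be.
noncomputable def kInfFactor (ω : ℝ → ℝ) (r : ℝ) : ℝ :=
  r + √(ω r) + ω √r + ω (r ^ 2) + ω r / ω r⁻¹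

namespace ClassKInf

variable {ω : ℝ → ℝ}

lemma apply_zero (hω : ClassKInf ω) : ω 0 = 0 := hω.2.2.2.1

lemma nonneg (hω : ClassKInf ω) {r : ℝ} (hr : 0 ≤ r) : 0 ≤ ω r := hω.2.2.2.2 r hr

lemma pos (hω : ClassKInf ω) {r : ℝ} (hr : 0 < r) : 0 < ω r := by
  simpa [hω.apply_zero] using hω.2.1 self_mem_Ici (mem_Ici.2 hr.le) hr

lemma mono (hω : ClassKInf ω) {r s : ℝ} (hr : 0 ≤ r) (hrs : r ≤ s) : ω r ≤ ω s :=
  hω.2.1.monotoneOn hr (mem_Ici.2 (hr.trans hrs)) hrs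

lemma continuousAt (hω : ClassKInf ω) {r : ℝ} (hr : 0 < r) : ContinuousAt ω r :=
  hω.1.continuousAt (Ici_mem_nhds hr)

lemma div_apply_inv_nonneg (hω : ClassKInf ω) {r : ℝ} (hr : 0 ≤ r) : 0 ≤ ω r / ω r⁻¹ :=
  div_nonneg (hω.nonneg hr) (hω.nonneg (inv_nonneg.2 hr))

lemma monotoneOn_div_apply_inv (hω : ClassKInf ω) :
    MonotoneOn (fun r => ω r / ω r⁻¹) (Ici 0) := by
  intro a ha b hb hab
  rcases (mem_Ici.1 ha).eq_or_lt with rfl | ha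
  · simpa [hω.apply_zero] using hω.div_apply_inv_nonneg hb
  exact div_le_div₀ (hω.nonneg hb) (hω.mono ha.le hab) (hω.pos (inv_pos.2 (ha.trans_le hab)))
    (hω.mono (inv_nonneg.2 hb) (inv_anti₀ ha hab))

lemma continuousOn_div_apply_inv (hω : ClassKInf ω) :
    ContinuousOn (fun r => ω r / ω r⁻¹) (Ici 0) := by
  intro r hr
  rcases (mem_Ici.1 hr).eq_or_lt with rfl | hr
  · have hupper : ∀ᶠ x in 𝓝[Ici 0] 0, ω x / ω x⁻¹ ≤ ω x / ω 1 := by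
      filter_upwards [self_mem_nhdsWithin, nhdsWithin_le_nhds (Iio_mem_nhds one_pos)]
        with x hx hx1
      rcases (mem_Ici.1 hx).eq_or_lt with rfl | hx
      · simp [hω.apply_zero]
      exact div_le_div_of_nonneg_left (hω.nonneg hx.le) (hω.pos one_pos)
        (hω.mono zero_le_one ((one_le_inv₀ hx).2 (le_of_lt hx1)))
    have hlower : ∀ᶠ x in 𝓝[Ici 0] 0, 0 ≤ ω x / ω x⁻¹ := by
      filter_upwards [self_mem_nhdsWithin] with x hx
      exact hω.div_apply_inv_nonneg hx
    have hlim : Tendsto (fun x => ω x / ω 1) (𝓝[Ici 0] 0) (𝓝 0) := by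
      simpa [hω.apply_zero] using ((hω.1 0 self_mem_Ici).div_const (ω 1)).tendsto
    simpa [ContinuousWithinAt, hω.apply_zero] using
      tendsto_of_tendsto_of_tendsto_of_le_of_le' tendsto_const_nhds hlim hlower hupper
  have hinv : 0 < r⁻¹ := inv_pos.2 hr
  exact ((hω.continuousAt hr).div ((hω.continuousAt hinv).comp (continuousAt_inv₀ hr.ne'))
    (hω.pos hinv).ne').continuousWithinAt

lemma kInfFactor_strictMonoOn (hω : ClassKInf ω) : StrictMonoOn (kInfFactor ω) (Ici 0) := by
  intro a ha b hb hab
  have ha' : 0 ≤ a := ha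
  have hω_le : ω a ≤ ω b := hω.mono ha' hab.le
  have hsq : ω √a ≤ ω √b := hω.mono (Real.sqrt_nonneg a) (Real.sqrt_le_sqrt hab.le)
  have hpow : ω (a ^ 2) ≤ ω (b ^ 2) := hω.mono (sq_nonneg a) (pow_le_pow_left₀ ha' hab.le 2)
  have hdiv : ω a / ω a⁻¹ ≤ ω b / ω b⁻¹ := hω.monotoneOn_div_apply_inv ha hb hab.le
  have hsqrt : √(ω a) ≤ √(ω b) := Real.sqrt_le_sqrt hω_le
  unfold kInfFactor
  linarith

variable {r : ℝ}

lemma kInfFactor_summands_nonneg (hω : ClassKInf ω) (hr : 0 ≤ r) :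
    0 ≤ √(ω r) ∧ 0 ≤ ω √r ∧ 0 ≤ ω (r ^ 2) ∧ 0 ≤ ω r / ω r⁻¹ :=
  ⟨Real.sqrt_nonneg _, hω.nonneg (Real.sqrt_nonneg r), hω.nonneg (sq_nonneg r),
    hω.div_apply_inv_nonneg hr⟩

lemma self_le_kInfFactor (hω : ClassKInf ω) (hr : 0 ≤ r) : r ≤ kInfFactor ω r := by
  obtain ⟨h₁, h₂, h₃, h₄⟩ := hω.kInfFactor_summands_nonneg hr
  unfold kInfFactor
  linarith

lemma sqrt_apply_le_kInfFactor (hω : ClassKInf ω) (hr : 0 ≤ r) : √(ω r) ≤ kInfFactor ω r := by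
  obtain ⟨h₁, h₂, h₃, h₄⟩ := hω.kInfFactor_summands_nonneg hr
  unfold kInfFactor
  linarith

lemma apply_sqrt_le_kInfFactor (hω : ClassKInf ω) (hr : 0 ≤ r) : ω √r ≤ kInfFactor ω r := by
  obtain ⟨h₁, h₂, h₃, h₄⟩ := hω.kInfFactor_summands_nonneg hr
  unfold kInfFactor
  linarith

lemma apply_sq_le_kInfFactor (hω : ClassKInf ω) (hr : 0 ≤ r) : ω (r ^ 2) ≤ kInfFactor ω r := by
  obtain ⟨h₁, h₂, h₃, h₄⟩ := hω.kInfFactor_summands_nonneg hr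
  unfold kInfFactor
  linarith

lemma div_apply_inv_le_kInfFactor (hω : ClassKInf ω) (hr : 0 ≤ r) :
    ω r / ω r⁻¹ ≤ kInfFactor ω r := by
  obtain ⟨h₁, h₂, h₃, h₄⟩ := hω.kInfFactor_summands_nonneg hr
  unfold kInfFactor
  linarith

lemma kInfFactor_nonneg (hω : ClassKInf ω) (hr : 0 ≤ r) : 0 ≤ kInfFactor ω r :=
  hr.trans (self_le_kInfFactor hω hr)

lemma kInfFactor_continuousOn (hω : ClassKInf ω) : ContinuousOn (kInfFactor ω) (Ici 0) := by
  have hsqrt : ContinuousOn (fun r => ω √r) (Ici 0) :=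
    hω.1.comp Real.continuous_sqrt.continuousOn fun r _ => mem_Ici.2 (Real.sqrt_nonneg r)
  have hsq : ContinuousOn (fun r : ℝ => ω (r ^ 2)) (Ici 0) :=
    hω.1.comp (continuous_pow 2).continuousOn fun r _ => mem_Ici.2 (sq_nonneg r)
  exact (((continuousOn_id.add (Real.continuous_sqrt.comp_continuousOn hω.1)).add hsqrt).add
    hsq).add hω.continuousOn_div_apply_inv

lemma classKInf_kInfFactor (hω : ClassKInf ω) : ClassKInf (kInfFactor ω) := by
  refine ⟨kInfFactor_continuousOn hω, kInfFactor_strictMonoOn hω, fun M => ?_, ?_,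
    fun r hr => kInfFactor_nonneg hω hr⟩
  · exact ⟨max M 0, le_max_right M 0,
      (le_max_left M 0).trans (self_le_kInfFactor hω (le_max_right M 0))⟩
  · simp [kInfFactor, hω.apply_zero]

variable {s : ℝ}

lemma apply_mul_le_kInfFactor_of_le_one (hω : ClassKInf ω) (hr : 0 ≤ r) (hs : 0 ≤ s)
    (hr1 : r ≤ 1) (hs1 : s ≤ 1) : ω (r * s) ≤ kInfFactor ω r * kInfFactor ω s := by
  have hωr : ω (r * s) ≤ ω r := hω.mono (mul_nonneg hr hs) (mul_le_of_le_one_right hr hs1)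
  have hωs : ω (r * s) ≤ ω s := hω.mono (mul_nonneg hr hs) (mul_le_of_le_one_left hs hr1)
  have hsq : ω (r * s) ^ 2 ≤ ω r * ω s := by
    rw [sq]
    exact mul_le_mul hωr hωs (hω.nonneg (mul_nonneg hr hs)) (hω.nonneg hr)
  calc ω (r * s) ≤ √(ω r * ω s) := (le_abs_self _).trans (Real.abs_le_sqrt hsq)
    _ = √(ω r) * √(ω s) := Real.sqrt_mul (hω.nonneg hr) _
    _ ≤ kInfFactor ω r * kInfFactor ω s :=
      mul_le_mul (hω.sqrt_apply_le_kInfFactor hr) (hω.sqrt_apply_le_kInfFactor hs)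
        (Real.sqrt_nonneg _) (hω.kInfFactor_nonneg hr)

lemma apply_mul_le_kInfFactor_of_one_le_of_le_one (hω : ClassKInf ω) (hr : 1 ≤ r) (hs : 0 ≤ s)
    (hs1 : s ≤ 1) : ω (r * s) ≤ kInfFactor ω r * kInfFactor ω s := by
  have hr0 : 0 < r := one_pos.trans_le hr
  rcases le_or_gt (r ^ 2 * s) 1 with hrs | hrs
  · have hr_sqrt : r * √s ≤ 1 := by
      rw [← pow_le_one_iff_of_nonneg (by positivity) two_ne_zero, mul_pow, Real.sq_sqrt hs]
      exact hrs
    have hle : r * s ≤ √s := by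
      calc r * s = r * √s * √s := by rw [mul_assoc, Real.mul_self_sqrt hs]
        _ ≤ 1 * √s := mul_le_mul_of_nonneg_right hr_sqrt (Real.sqrt_nonneg s)
        _ = √s := one_mul _
    calc ω (r * s) ≤ ω √s := hω.mono (by positivity) hle
      _ ≤ kInfFactor ω s := hω.apply_sqrt_le_kInfFactor hs
      _ ≤ kInfFactor ω r * kInfFactor ω s :=
        le_mul_of_one_le_left (hω.kInfFactor_nonneg hs) (hr.trans (hω.self_le_kInfFactor hr0.le))
  · have hinv : r⁻¹ ≤ √s := by
      rw [Real.le_sqrt (inv_nonneg.2 hr0.le) hs, inv_pow, inv_le_iff_one_le_mul₀ (by positivity)]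
      linarith
    have hωinv : 0 < ω r⁻¹ := hω.pos (inv_pos.2 hr0)
    calc ω (r * s) ≤ ω r := hω.mono (by positivity) (mul_le_of_le_one_right hr0.le hs1)
      _ = ω r / ω r⁻¹ * ω r⁻¹ := (div_mul_cancel₀ _ hωinv.ne').symm
      _ ≤ kInfFactor ω r * kInfFactor ω s :=
        mul_le_mul (hω.div_apply_inv_le_kInfFactor hr0.le)
          ((hω.mono (inv_nonneg.2 hr0.le) hinv).trans (hω.apply_sqrt_le_kInfFactor hs))
          hωinv.le (hω.kInfFactor_nonneg hr0.le)

lemma apply_mul_le_kInfFactor_of_one_le_of_le (hω : ClassKInf ω) (hr : 1 ≤ r) (hs : 0 ≤ s)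
    (hsr : s ≤ r) : ω (r * s) ≤ kInfFactor ω r * kInfFactor ω s := by
  rcases le_total s 1 with hs1 | hs1
  · exact hω.apply_mul_le_kInfFactor_of_one_le_of_le_one hr hs hs1
  have hr0 : 0 ≤ r := zero_le_one.trans hr
  calc ω (r * s) ≤ ω (r ^ 2) := hω.mono (mul_nonneg hr0 hs) (by nlinarith)
    _ ≤ kInfFactor ω r := hω.apply_sq_le_kInfFactor hr0
    _ ≤ kInfFactor ω r * kInfFactor ω s :=
      le_mul_of_one_le_right (hω.kInfFactor_nonneg hr0) (hs1.trans (hω.self_le_kInfFactor hs))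

end ClassKInf

/-- cf. Lemma 2.9: every class-`K∞` function `ω` admits class-`K∞`
functions `σ₁, σ₂` with `ω(r·s) ≤ σ₁(r)·σ₂(s)` for all `r, s ≥ 0`. -/
theorem stmt4 (ω : ℝ → ℝ) (hω : ClassKInf ω) :
    ∃ σ₁ σ₂ : ℝ → ℝ, ClassKInf σ₁ ∧ ClassKInf σ₂ ∧
      ∀ r s : ℝ, 0 ≤ r → 0 ≤ s → ω (r * s) ≤ σ₁ r * σ₂ s := by
  refine ⟨kInfFactor ω, kInfFactor ω, hω.classKInf_kInfFactor, hω.classKInf_kInfFactor,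
    fun r s hr hs => ?_⟩
  wlog hsr : s ≤ r generalizing r s
  · rw [mul_comm r s, mul_comm (kInfFactor ω r)]
    exact this s r hs hr (le_of_not_ge hsr)
  rcases le_total r 1 with hr1 | hr1
  · exact hω.apply_mul_le_kInfFactor_of_le_one hr hs hr1 (hsr.trans hr1)
  · exact hω.apply_mul_le_kInfFactor_of_one_le_of_le hr1 hs hsr
end

section
/- Let H : ℝⁿ ⇉ ℝⁿ be outer semicontinuous and locally bounded with H(x) nonempty and convex for all x ∈ ℝⁿ (i.e., the inclusion ẋ ∈ H(x) on ℝⁿ is well-posed). Then for every T > 0, every ε > 0, and every x₀ ∈ ℝⁿ there exists a (T, ε)-truncated solution of ẋ ∈ H(x) with x(0) = x₀. -/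
open Metric Set Filter Topology MeasureTheory Pointwise
open scoped RealInnerProductSpace

/-!
Replacing `H` by `H ∘ ρ`, where `ρ` is the radial retraction onto the closed ball `B(x₀, ε)`,
gives an outer semicontinuous, convex-valued map bounded by some `M`; it agrees with `H` on the
ball, so a solution of the modified inclusion, stopped when it first reaches the sphere, is a
`(T, ε)`-truncated solution.

For a bounded map, the Euler polygons built from a selection of `H` are `M`-Lipschitz, so by
Arzelà–Ascoli a subsequence converges uniformly on `[0, T]` to an `M`-Lipschitz `z`, which is the
integral of its a.e. derivative. If `ż(t) ∉ H(z(t))` at a point of differentiability, Hahn–Banach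
gives a half-space `{ℓ ≤ c}` containing `H(z(t))` but not `ż(t)`; by outer semicontinuity and
boundedness it contains all values of `H` near `z(t)`. The polygons' increments over short
intervals after `t` are integrals of such values, so `ℓ(z(t + h) - z(t)) ≤ c h`, whence
`ℓ(ż(t)) ≤ c`, a contradiction.
-/

open scoped NNReal BoundedContinuousFunction

theorem IsCompact.isBounded_biUnion_of_locallyBounded {X α : Type*} [TopologicalSpace X]
    [Bornology α] {H : X → Set α} (hlb : ∀ x, ∃ U ∈ 𝓝 x, Bornology.IsBounded (⋃ y ∈ U, H y))
    {K : Set X} (hK : IsCompact K) : Bornology.IsBounded (⋃ y ∈ K, H y) := by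
  choose U hU hUb using hlb
  obtain ⟨t, -, hKt⟩ := hK.elim_nhds_subcover U fun x _ => hU x
  refine ((Bornology.isBounded_biUnion_finset t).2 fun x _ => hUb x).subset ?_
  refine iUnion₂_subset fun y hy => ?_
  obtain ⟨x, hxt, hyx⟩ := mem_iUnion₂.1 (hKt hy)
  exact subset_biUnion_of_mem (u := fun x => ⋃ y ∈ U x, H y) hxt |>.trans' <|
    subset_biUnion_of_mem (u := H) hyx

theorem exists_exitTime {α : Type*} [PseudoMetricSpace α] {z : ℝ → α} {T ε : ℝ}
    (hz : ContinuousOn z (Icc 0 T)) (hT : 0 ≤ T) (hε : 0 ≤ ε) :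
    ∃ T' ∈ Icc 0 T, (∀ t ∈ Icc 0 T', dist (z t) (z 0) ≤ ε) ∧
      (T' = T ∨ dist (z T') (z 0) = ε) := by
  by_cases hstay : ∀ t ∈ Icc 0 T, dist (z t) (z 0) ≤ ε
  · exact ⟨T, ⟨hT, le_rfl⟩, hstay, Or.inl rfl⟩
  push Not at hstay
  have hdist : ContinuousOn (fun t => dist (z t) (z 0)) (Icc 0 T) := by fun_prop
  set S := Icc 0 T ∩ (fun t => dist (z t) (z 0)) ⁻¹' Ici ε
  have hS : BddBelow S := ⟨0, fun t ht => ht.1.1⟩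
  have hτ : sInf S ∈ S :=
    (hdist.preimage_isClosed_of_isClosed isClosed_Icc isClosed_Ici).csInf_mem
      (hstay.imp fun t ht => ⟨ht.1, ht.2.le⟩) hS
  have hbefore : ∀ t ∈ Icc 0 T, t < sInf S → dist (z t) (z 0) < ε := fun t ht htτ =>
    not_le.1 fun h => (csInf_le hS ⟨ht, h⟩).not_gt htτ
  -- by the intermediate value theorem the distance `ε` is attained on `[0, sInf S]`
  obtain ⟨s, hs, hsε⟩ : ε ∈ (fun t => dist (z t) (z 0)) '' Icc 0 (sInf S) :=
    intermediate_value_Icc hτ.1.1 (hdist.mono (Icc_subset_Icc_right hτ.1.2))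
      ⟨by simp [hε], hτ.2⟩
  have hsτ : s = sInf S :=
    le_antisymm hs.2 (csInf_le hS ⟨⟨hs.1, hs.2.trans hτ.1.2⟩, hsε.ge⟩)
  rw [hsτ] at hsε
  refine ⟨sInf S, hτ.1, fun t ht => ?_, Or.inr hsε⟩
  rcases ht.2.lt_or_eq with h | rfl
  · exact (hbefore t ⟨ht.1, h.le.trans hτ.1.2⟩ h).le
  · exact hsε.le

theorem exists_tendstoUniformlyOn_Icc_of_lipschitzWith {E : Type*} [MetricSpace E]
    [ProperSpace E] {X : ℕ → ℝ → E} {K : ℝ≥0} (hX : ∀ k, LipschitzWith K (X k)) {x₀ : E}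
    (hX0 : ∀ k, X k 0 = x₀) {T : ℝ} (hT : 0 ≤ T) :
    ∃ (z : ℝ → E) (φ : ℕ → ℕ), StrictMono φ ∧ LipschitzWith K z ∧
      TendstoUniformlyOn (fun j => X (φ j)) z atTop (Icc 0 T) := by
  have : CompactSpace (Icc 0 T) := isCompact_iff_compactSpace.1 isCompact_Icc
  let o : Icc 0 T := ⟨0, le_rfl, hT⟩
  let F : ℕ → Icc 0 T →ᵇ E := fun k =>
    .mkOfCompact ⟨fun t => X k t, ((hX k).restrict _).continuous⟩
  let A : Set (Icc 0 T →ᵇ E) := {f | LipschitzWith K f ∧ f o = x₀}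
  have hA : IsClosed A := by
    have hcoe := BoundedContinuousFunction.continuous_coe (α := Icc 0 T) (β := E)
    exact ((isClosed_setOfPred_lipschitzWith (α := Icc 0 T) (β := E) K).preimage hcoe).inter
      (isClosed_eq ((continuous_apply o).comp hcoe) continuous_const)
  have hAcpt : IsCompact A := by
    refine BoundedContinuousFunction.arzela_ascoli₂ (closedBall x₀ (K * T))
      (isCompact_closedBall _ _) A hA (fun f t hf => ?_)
      (LipschitzWith.uniformEquicontinuous (fun f : A => ⇑(f : Icc 0 T →ᵇ E)) K
        fun f => f.2.1).equicontinuous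
    rw [mem_closedBall, ← hf.2]
    refine (hf.1.dist_le_mul t o).trans (mul_le_mul_of_nonneg_left ?_ K.2)
    rw [Subtype.dist_eq, Real.dist_eq, sub_zero, abs_of_nonneg t.2.1]
    exact t.2.2
  obtain ⟨g, hg, φ, hφ, hlim⟩ :=
    hAcpt.tendsto_subseq (show ∀ k, F k ∈ A from fun k => ⟨(hX k).restrict _, hX0 k⟩)
  refine ⟨g ∘ projIcc 0 T hT, φ, hφ, by simpa using hg.1.comp (LipschitzWith.projIcc hT), ?_⟩
  rw [tendstoUniformlyOn_iff_tendstoUniformly_comp_coe]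
  convert BoundedContinuousFunction.tendsto_iff_tendstoUniformly.1 hlim with j t t
  · rfl
  · ext t
    simp [projIcc_of_mem hT t.2]

section NormedSpace

variable {E : Type*} [NormedAddCommGroup E] [NormedSpace ℝ E]

noncomputable def radialRetraction (x₀ : E) (r : ℝ) (x : E) : E :=
  x₀ + (r / max r ‖x - x₀‖) • (x - x₀)

theorem continuous_radialRetraction (x₀ : E) {r : ℝ} (hr : 0 < r) :
    Continuous (radialRetraction x₀ r) :=
  continuous_const.add <| (continuous_const.div (by fun_prop)
    fun x => (lt_max_of_lt_left hr).ne').smul (by fun_prop)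

theorem radialRetraction_mem_closedBall (x₀ : E) {r : ℝ} (hr : 0 < r) (x : E) :
    radialRetraction x₀ r x ∈ closedBall x₀ r := by
  have hmax : 0 < max r ‖x - x₀‖ := lt_max_of_lt_left hr
  rw [mem_closedBall, dist_eq_norm, radialRetraction, add_sub_cancel_left, norm_smul,
    Real.norm_of_nonneg (div_nonneg hr.le hmax.le), div_mul_eq_mul_div, div_le_iff₀ hmax]
  exact mul_le_mul_of_nonneg_left (le_max_right _ _) hr.le

theorem radialRetraction_of_mem_closedBall (x₀ : E) {r : ℝ} (hr : 0 < r) {x : E}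
    (hx : x ∈ closedBall x₀ r) : radialRetraction x₀ r x = x := by
  rw [mem_closedBall, dist_eq_norm] at hx
  simp [radialRetraction, max_eq_left hx, hr.ne']

theorem HasDerivAt.apply_le_of_eventually_apply_sub_le {z : ℝ → E} {z' : E} {t c : ℝ}
    (hz : HasDerivAt z z' t) (ℓ : E →L[ℝ] ℝ)
    (hle : ∀ᶠ h in 𝓝[>] 0, ℓ (z (t + h) - z t) ≤ c * h) : ℓ z' ≤ c := by
  refine le_of_tendsto (ℓ.hasFDerivAt.comp_hasDerivAt t hz).tendsto_slope_zero_right ?_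
  filter_upwards [hle, self_mem_nhdsWithin] with h hh (hpos : 0 < h)
  rw [Function.comp_apply, Function.comp_apply, ← map_sub, smul_eq_mul, inv_mul_le_iff₀ hpos]
  linarith

theorem LipschitzWith.integral_deriv_eq_sub [FiniteDimensional ℝ E] {f : ℝ → E} {K : ℝ≥0}
    (hf : LipschitzWith K f) (a b : ℝ) : ∫ x in a..b, deriv f x = f b - f a := by
  have hint : LocallyIntegrable (deriv f) volume :=
    (locallyIntegrable_const (K : ℝ)).mono (aestronglyMeasurable_deriv f _)
      (Eventually.of_forall fun x => (norm_deriv_le_of_lipschitz hf).trans (le_abs_self _))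
  have hII : ∀ x y, IntervalIntegrable (deriv f) volume x y := fun x y =>
    (hint.integrableOn_isCompact isCompact_uIcc).intervalIntegrable
  have hprim : LipschitzWith K fun x => ∫ t in a..x, deriv f t :=
    LipschitzWith.of_dist_le_mul fun x y => by
      rw [dist_eq_norm, intervalIntegral.integral_interval_sub_left (hII _ _) (hII _ _),
        Real.dist_eq]
      exact intervalIntegral.norm_integral_le_of_norm_le_const fun t _ =>
        norm_deriv_le_of_lipschitz hf
  -- `f` minus the primitive of its derivative is absolutely continuous with vanishing derivative
  set g := fun x => f x - ∫ t in a..x, deriv f t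
  have hgac : AbsolutelyContinuousOnInterval g a b :=
    (hf.sub hprim).lipschitzOnWith.absolutelyContinuousOnInterval
  have hg' : ∀ᵐ x, x ∈ uIcc a b → HasDerivAt g 0 x := by
    filter_upwards [hf.ae_differentiableAt, LocallyIntegrable.ae_hasDerivAt_integral hint]
      with x hfx hprimx _
    simpa using hfx.hasDerivAt.fun_sub (hprimx a)
  obtain ⟨C, hC⟩ := hgac.const_of_ae_hasDerivAt_zero hg'
  have hab := (hC a left_mem_uIcc).trans (hC b right_mem_uIcc).symm
  simp only [g, intervalIntegral.integral_same, sub_zero] at hab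
  rw [hab]
  abel

theorem exists_separating_halfspace [ProperSpace E] {X : Type*} [PseudoMetricSpace X]
    {H : X → Set E} (hosc : IsClosed {p : X × E | p.2 ∈ H p.1}) {M : ℝ}
    (hb : ∀ x, ∀ v ∈ H x, ‖v‖ ≤ M) {x : X} {w : E} (hconv : Convex ℝ (H x)) (hw : w ∉ H x) :
    ∃ (ℓ : E →L[ℝ] ℝ) (c δ : ℝ), 0 < δ ∧ c < ℓ w ∧
      ∀ y, dist y x ≤ δ → ∀ v ∈ H y, ℓ v ≤ c := by
  obtain ⟨ℓ, c, hHc, hcw⟩ :=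
    geometric_hahn_banach_closed_point hconv (hosc.preimage (Continuous.prodMk_right x)) hw
  refine ⟨ℓ, c, ?_⟩
  by_contra! hcon
  choose y hyx v hv hcv using fun m : ℕ => hcon (1 / (m + 1)) Nat.one_div_pos_of_nat hcw
  obtain ⟨u, -, φ, hφ, hvu⟩ := (isCompact_closedBall (0 : E) M).tendsto_subseq
    (x := v) fun m => mem_closedBall_zero_iff.2 (hb _ _ (hv m))
  have hy : Tendsto y atTop (𝓝 x) :=
    tendsto_iff_dist_tendsto_zero.2 <| squeeze_zero (fun _ => dist_nonneg) hyx
      tendsto_one_div_add_atTop_nhds_zero_nat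
  have hu : u ∈ H x := hosc.mem_of_tendsto ((hy.comp hφ.tendsto_atTop).prodMk_nhds hvu)
    (Eventually.of_forall fun m => hv (φ m))
  exact (hHc u hu).not_ge <| ge_of_tendsto ((ℓ.continuous.tendsto u).comp hvu)
    (Eventually.of_forall fun m => (hcv (φ m)).le)

def eulerNode (v : E → E) (x₀ : E) (h : ℝ) : ℕ → E
  | 0 => x₀
  | i + 1 => eulerNode v x₀ h i + h • v (eulerNode v x₀ h i)

noncomputable def eulerSlope (v : E → E) (x₀ : E) (h t : ℝ) : E :=
  v (eulerNode v x₀ h ⌊t / h⌋₊)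

/-- The Euler polygon with step `h`, written as the primitive of its piecewise constant slope. -/
noncomputable def eulerPolygon (v : E → E) (x₀ : E) (h t : ℝ) : E :=
  x₀ + ∫ s in (0 : ℝ)..t, eulerSlope v x₀ h s

section Euler

variable {v : E → E} {x₀ : E} {h : ℝ} {M : ℝ≥0}

@[simp]
theorem eulerPolygon_zero : eulerPolygon v x₀ h 0 = x₀ := by
  simp [eulerPolygon]

theorem intervalIntegrable_eulerSlope (hv : ∀ x, ‖v x‖ ≤ M) (a b : ℝ) :
    IntervalIntegrable (eulerSlope v x₀ h) volume a b := by
  have hmeas : StronglyMeasurable (eulerSlope v x₀ h) :=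
    (StronglyMeasurable.of_discrete (f := fun i => v (eulerNode v x₀ h i))).comp_measurable
      (Nat.measurable_floor.comp (measurable_id.div_const h))
  refine (Measure.integrableOn_of_bounded (M := M) ?_ hmeas.aestronglyMeasurable
    (Eventually.of_forall fun t => hv _)).intervalIntegrable
  simp

theorem eulerPolygon_sub (hv : ∀ x, ‖v x‖ ≤ M) (s t : ℝ) :
    eulerPolygon v x₀ h t - eulerPolygon v x₀ h s = ∫ u in s..t, eulerSlope v x₀ h u := by
  simp only [eulerPolygon, add_sub_add_left_eq_sub]
  exact intervalIntegral.integral_interval_sub_left (intervalIntegrable_eulerSlope hv _ _)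
    (intervalIntegrable_eulerSlope hv _ _)

theorem lipschitzWith_eulerPolygon (hv : ∀ x, ‖v x‖ ≤ M) :
    LipschitzWith M (eulerPolygon v x₀ h) :=
  LipschitzWith.of_dist_le_mul fun t s => by
    rw [dist_eq_norm, eulerPolygon_sub hv, Real.dist_eq]
    exact intervalIntegral.norm_integral_le_of_norm_le_const fun u _ => hv _

variable [CompleteSpace E]

theorem eulerPolygon_natCast_mul (hh : 0 < h) (hv : ∀ x, ‖v x‖ ≤ M) (i : ℕ) :
    eulerPolygon v x₀ h (i * h) = eulerNode v x₀ h i := by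
  induction i with
  | zero => simp [eulerNode]
  | succ i ih =>
    have hslope : ∀ᵐ u, u ∈ uIoc (i * h : ℝ) ((i + 1 : ℕ) * h) →
        eulerSlope v x₀ h u = v (eulerNode v x₀ h i) := by
      filter_upwards [compl_mem_ae_iff.2 (measure_singleton (((i + 1 : ℕ) : ℝ) * h))]
        with u hne hu
      rw [uIoc_of_le (by gcongr; simp)] at hu
      have hfloor : ⌊u / h⌋₊ = i := by
        rw [Nat.floor_eq_iff (div_nonneg (hu.1.le.trans' (by positivity)) hh.le),
          le_div_iff₀ hh, div_lt_iff₀ hh]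
        exact ⟨hu.1.le, by exact_mod_cast lt_of_le_of_ne hu.2 hne⟩
      rw [eulerSlope, hfloor]
    have hstep := eulerPolygon_sub (x₀ := x₀) (h := h) hv (i * h) ((i + 1 : ℕ) * h)
    rw [intervalIntegral.integral_congr_ae hslope, intervalIntegral.integral_const, ih] at hstep
    rw [sub_eq_iff_eq_add'.1 hstep, eulerNode]
    congr 2
    push_cast
    ring

theorem dist_eulerNode_floor_le (hh : 0 < h) (hv : ∀ x, ‖v x‖ ≤ M) {t : ℝ} (ht : 0 ≤ t) :
    dist (eulerNode v x₀ h ⌊t / h⌋₊) (eulerPolygon v x₀ h t) ≤ M * h := by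
  have hfl : ⌊t / h⌋₊ * h ≤ t := (le_div_iff₀ hh).1 (Nat.floor_le (by positivity))
  have hlt : t < (⌊t / h⌋₊ + 1) * h := (div_lt_iff₀ hh).1 (Nat.lt_floor_add_one _)
  rw [← eulerPolygon_natCast_mul hh hv]
  refine ((lipschitzWith_eulerPolygon hv).dist_le_mul _ _).trans ?_
  rw [Real.dist_eq, abs_of_nonpos (by linarith)]
  gcongr
  linarith

theorem apply_eulerPolygon_sub_le (hh : 0 < h) (hv : ∀ x, ‖v x‖ ≤ M) {ℓ : E →L[ℝ] ℝ} {x : E}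
    {c δ : ℝ} (hsep : ∀ y, dist y x ≤ δ → ℓ (v y) ≤ c) {t s : ℝ} (ht : 0 ≤ t) (hts : t ≤ s)
    (hnear : ∀ u ∈ Icc t s, dist (eulerPolygon v x₀ h u) x + M * h ≤ δ) :
    ℓ (eulerPolygon v x₀ h s - eulerPolygon v x₀ h t) ≤ c * (s - t) := by
  have hint := intervalIntegrable_eulerSlope (x₀ := x₀) (h := h) hv t s
  rw [eulerPolygon_sub hv, ← ℓ.intervalIntegral_comp_comm hint]
  calc ∫ u in t..s, ℓ (eulerSlope v x₀ h u) ≤ ∫ _ in t..s, c := by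
        refine intervalIntegral.integral_mono_on hts
          ⟨ℓ.integrable_comp hint.1, ℓ.integrable_comp hint.2⟩
          intervalIntegrable_const fun u hu => hsep _ ?_
        have := dist_eulerNode_floor_le (x₀ := x₀) hh hv (ht.trans hu.1)
        linarith [dist_triangle (eulerNode v x₀ h ⌊u / h⌋₊) (eulerPolygon v x₀ h u) x, hnear u hu]
    _ = c * (s - t) := by simp [mul_comm]

end Euler

theorem deriv_mem_of_tendstoUniformlyOn_eulerPolygon [ProperSpace E]
    {H : E → Set E} (hosc : IsClosed {p : E × E | p.2 ∈ H p.1}) (hconv : ∀ x, Convex ℝ (H x))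
    {M : ℝ≥0} (hb : ∀ x, ∀ w ∈ H x, ‖w‖ ≤ M) {v : E → E} (hv : ∀ x, v x ∈ H x) {x₀ : E}
    {step : ℕ → ℝ} (hstep : ∀ j, 0 < step j) (hstep0 : Tendsto step atTop (𝓝 0))
    {z : ℝ → E} (hz : LipschitzWith M z) {T : ℝ}
    (hlim : TendstoUniformlyOn (fun j => eulerPolygon v x₀ (step j)) z atTop (Icc 0 T))
    {t : ℝ} (ht : t ∈ Ico 0 T) (hzt : DifferentiableAt ℝ z t) : deriv z t ∈ H (z t) := by
  by_contra hnot
  obtain ⟨ℓ, c, δ, hδ, hcz', hsep⟩ := exists_separating_halfspace hosc hb (hconv (z t)) hnot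
  refine hcz'.not_ge (hzt.hasDerivAt.apply_le_of_eventually_apply_sub_le ℓ ?_)
  -- on `[t, t + η]` the limit `z` stays within `δ / 3` of `z t`
  set η := min (T - t) (δ / 3 / (M + 1))
  have hη : 0 < η := lt_min (sub_pos.2 ht.2) (by positivity)
  have hMη : M * η ≤ δ / 3 := by
    calc M * η ≤ (M + 1) * (δ / 3 / (M + 1)) := by
          gcongr
          · linarith
          · exact min_le_right _ _
      _ = δ / 3 := by field_simp
  have hMstep : ∀ᶠ j in atTop, M * step j < δ / 3 := by
    have : Tendsto (fun j => (M : ℝ) * step j) atTop (𝓝 0) := by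
      simpa using hstep0.const_mul (M : ℝ)
    exact this.eventually (gt_mem_nhds (by positivity))
  filter_upwards [Ioo_mem_nhdsGT hη] with h ⟨hh0, hhη⟩
  have hIcc : Icc t (t + h) ⊆ Icc 0 T :=
    Icc_subset_Icc ht.1 (by linarith [min_le_left (T - t) (δ / 3 / (M + 1))])
  have hlim_at : ∀ u ∈ Icc t (t + h),
      Tendsto (fun j => eulerPolygon v x₀ (step j) u) atTop (𝓝 (z u)) := fun u hu =>
    hlim.tendsto_at (hIcc hu)
  refine le_of_tendsto ((ℓ.continuous.tendsto _).comp
    ((hlim_at _ (right_mem_Icc.2 (by linarith))).sub (hlim_at _ (left_mem_Icc.2 (by linarith)))))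
    ?_
  filter_upwards [Metric.tendstoUniformlyOn_iff.1 hlim (δ / 3) (by positivity), hMstep]
    with j hunif hstepj
  have := apply_eulerPolygon_sub_le (x₀ := x₀) (hstep j) (fun x => hb x _ (hv x))
    (fun y hy => hsep y hy _ (hv y)) ht.1 (le_add_of_nonneg_right hh0.le) fun u hu => ?_
  · simpa using this
  have hzu : dist (z u) (z t) ≤ M * h := by
    refine (hz.dist_le_mul u t).trans ?_
    rw [Real.dist_eq, abs_of_nonneg (by linarith [hu.1])]
    gcongr
    linarith [hu.2]
  have hMh : (M : ℝ) * h ≤ M * η := by gcongr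
  have hXz := hunif u (hIcc hu)
  rw [dist_comm] at hXz
  linarith [dist_triangle (eulerPolygon v x₀ (step j) u) (z u) (z t)]

theorem exists_lipschitzWith_deriv_mem [FiniteDimensional ℝ E] {H : E → Set E}
    (hosc : IsClosed {p : E × E | p.2 ∈ H p.1}) (hne : ∀ x, (H x).Nonempty)
    (hconv : ∀ x, Convex ℝ (H x)) {M : ℝ≥0} (hb : ∀ x, ∀ w ∈ H x, ‖w‖ ≤ M) (x₀ : E) {T : ℝ}
    (hT : 0 ≤ T) :
    ∃ z : ℝ → E, z 0 = x₀ ∧ LipschitzWith M z ∧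
      ∀ᵐ t ∂volume.restrict (Icc 0 T), deriv z t ∈ H (z t) := by
  choose v hv using hne
  obtain ⟨z, φ, hφ, hz, hlim⟩ := exists_tendstoUniformlyOn_Icc_of_lipschitzWith
    (fun j => lipschitzWith_eulerPolygon (x₀ := x₀) (h := 1 / (j + 1)) fun x => hb x _ (hv x))
    (fun _ => eulerPolygon_zero) hT
  refine ⟨z, tendsto_nhds_unique (hlim.tendsto_at (left_mem_Icc.2 hT)) (by simp), hz, ?_⟩
  rw [Measure.restrict_congr_set Ico_ae_eq_Icc.symm]
  filter_upwards [ae_restrict_mem measurableSet_Ico, ae_restrict_of_ae hz.ae_differentiableAt]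
    with t ht hzt
  exact deriv_mem_of_tendstoUniformlyOn_eulerPolygon hosc hconv hb hv
    (fun j => Nat.one_div_pos_of_nat)
    (tendsto_one_div_add_atTop_nhds_zero_nat.comp hφ.tendsto_atTop) hz hlim ht hzt

end NormedSpace

theorem isSolutionOn_univ_of_lipschitzWith {n : ℕ} {H : Euc n → Set (Euc n)} {z : ℝ → Euc n}
    {K : ℝ≥0} (hz : LipschitzWith K z) {T : ℝ}
    (hH : ∀ᵐ t ∂volume.restrict (Icc 0 T), deriv z t ∈ H (z t)) : IsSolutionOn H univ T z :=
  ⟨deriv z, fun _ _ => trivial,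
    Measure.integrableOn_of_bounded (by simp) (aestronglyMeasurable_deriv z _)
      (Eventually.of_forall fun _ => norm_deriv_le_of_lipschitz hz),
    hH, fun t _ => by rw [hz.integral_deriv_eq_sub]; abel⟩

/-- cf. Cor. 2.4: a well-posed inclusion on `ℝⁿ` admits a
`(T, ε)`-truncated solution for every `T, ε > 0` and every initial condition. -/
theorem stmt5 {n : ℕ} (H : Euc n → Set (Euc n))
    (hosc : IsClosed {p : Euc n × Euc n | p.2 ∈ H p.1})
    (hlb : ∀ x : Euc n, ∃ U ∈ nhds x, Bornology.IsBounded (⋃ y ∈ U, H y))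
    (hne : ∀ x : Euc n, (H x).Nonempty) (hconv : ∀ x : Euc n, Convex ℝ (H x)) :
    ∀ T : ℝ, 0 < T → ∀ ε : ℝ, 0 < ε → ∀ x₀ : Euc n,
      ∃ (T' : ℝ) (z : ℝ → Euc n), IsTruncSol H Set.univ T ε x₀ T' z := by
  intro T hT ε hε x₀
  obtain ⟨C, hC⟩ := isBounded_iff_forall_norm_le.1
    ((isCompact_closedBall x₀ ε).isBounded_biUnion_of_locallyBounded hlb)
  have hM : ∀ x ∈ closedBall x₀ ε, ∀ w ∈ H x, ‖w‖ ≤ C.toNNReal := fun x hx w hw =>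
    (hC w (mem_biUnion hx hw)).trans (Real.le_coe_toNNReal C)
  obtain ⟨z, hz0, hz, hzH⟩ :=
    exists_lipschitzWith_deriv_mem (H := fun x => H (radialRetraction x₀ ε x))
      (hosc.preimage ((continuous_radialRetraction x₀ hε).prodMap continuous_id))
      (fun x => hne _) (fun x => hconv _)
      (fun x => hM _ (radialRetraction_mem_closedBall x₀ hε x)) x₀ hT.le
  obtain ⟨T', hT', hball, hexit⟩ := exists_exitTime hz.continuous.continuousOn hT.le hε.le
  simp only [hz0, dist_eq_norm] at hball hexit
  refine ⟨T', z, hT'.1, hT'.2, isSolutionOn_univ_of_lipschitzWith hz ?_, hz0, hball, hexit⟩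
  filter_upwards [ae_restrict_of_ae_restrict_of_subset (Icc_subset_Icc_right hT'.2) hzH,
    ae_restrict_mem measurableSet_Icc] with t htH ht
  rwa [radialRetraction_of_mem_closedBall x₀ hε (mem_closedBall_iff_norm.2 (hball t ht))] at htH
end

section
/- Consider the anti-windup approximation ż ∈ F_K(z) := f(z, P_Z(z)) − (1/K)·G⁻¹(P_Z(z))(z − P_Z(z)) and a point z₀ ∈ Z at which the local assumption holds with constants M, ν, μ, α, ε > 0. Given any T > 0 and any sequence K_n → 0⁺, any sequence {z_n} of (T, ε)-truncated solutions of the anti-windup approximation with K = K_n and z_n(0) = z₀ has a subsequence whose graphs converge in the Painlevé–Kuratowski sense (i.e., the subsequence converges graphically). -/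
open Metric Set Filter Topology MeasureTheory Pointwise
open scoped RealInnerProductSpace

/-!
Truncation confines every graph to the compact set `[0,T] × (z₀ + ε𝔹)`. The closed subsets of
a compact metric space form a compact space for the Hausdorff distance, so the closures of the
graphs have a subsequence converging in Hausdorff distance, and Hausdorff convergence implies
Painlevé–Kuratowski convergence to the closure of the limit.
-/

open TopologicalSpace

theorem kuratowskiTendsto_closure_of_tendsto_hausdorffEDist {X : Type*} [PseudoEMetricSpace X]
    {A : ℕ → Set X} {L : Set X}
    (h : Tendsto (fun i => hausdorffEDist (A i) L) atTop (𝓝 0)) :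
    KuratowskiTendsto A (closure L) := by
  have h_eventually_lt : ∀ r > 0, ∀ᶠ i in atTop, hausdorffEDist (A i) L < r := fun r hr =>
    (tendsto_order.1 h).2 r hr
  constructor
  · intro x hx U hU
    obtain ⟨r, hr, hrU⟩ := EMetric.mem_nhds_iff.1 hU
    obtain ⟨y, hyL, hxy⟩ := EMetric.mem_closure_iff.1 hx (r / 2) (ENNReal.half_pos hr.ne')
    filter_upwards [h_eventually_lt (r / 2) (ENNReal.half_pos hr.ne')] with i hi
    obtain ⟨a, haA, hya⟩ :=
      exists_edist_lt_of_hausdorffEDist_lt hyL (by rwa [hausdorffEDist_comm])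
    refine ⟨a, haA, hrU ?_⟩
    calc edist a x ≤ edist x y + edist y a := by rw [edist_comm a x]; exact edist_triangle _ _ _
      _ < r / 2 + r / 2 := ENNReal.add_lt_add hxy hya
      _ = r := ENNReal.add_halves r
  · intro x hx
    refine EMetric.mem_closure_iff.2 fun r hr => ?_
    obtain ⟨i, ⟨a, haA, hax⟩, hi⟩ :=
      ((hx _ (Metric.eball_mem_nhds x (ENNReal.half_pos hr.ne'))).and_eventually
        (h_eventually_lt (r / 2) (ENNReal.half_pos hr.ne'))).exists
    obtain ⟨y, hyL, hay⟩ := exists_edist_lt_of_hausdorffEDist_lt haA hi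
    refine ⟨y, hyL, ?_⟩
    calc edist x y ≤ edist a x + edist a y := by rw [edist_comm a x]; exact edist_triangle _ _ _
      _ < r / 2 + r / 2 := ENNReal.add_lt_add hax hay
      _ = r := ENNReal.add_halves r

theorem exists_subseq_kuratowskiTendsto_of_subset_isCompact {X : Type*} [EMetricSpace X]
    {S : Set X} (hS : IsCompact S) {A : ℕ → Set X} (hA : ∀ i, A i ⊆ S) :
    ∃ φ : ℕ → ℕ, StrictMono φ ∧
      ∃ L : Set X, KuratowskiTendsto (fun i => A (φ i)) L := by
  have := isCompact_iff_compactSpace.1 hS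
  obtain ⟨L, -, φ, hφ, hL⟩ := isCompact_univ.tendsto_subseq
    (x := fun i => Closeds.closure ((↑) ⁻¹' A i : Set S)) fun _ => mem_univ _
  refine ⟨φ, hφ, _,
    kuratowskiTendsto_closure_of_tendsto_hausdorffEDist (L := (↑) '' (L : Set S)) ?_⟩
  have h_edist (i : ℕ) : edist (Closeds.closure ((↑) ⁻¹' A (φ i) : Set S)) L =
      hausdorffEDist (A (φ i)) ((↑) '' (L : Set S)) := by
    rw [Closeds.edist_eq, Closeds.coe_closure, hausdorffEDist_closure_left,
      ← hausdorffEDist_image isometry_subtype_coe, Subtype.image_preimage_coe,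
      inter_eq_right.2 (hA (φ i))]
  simpa only [Function.comp_apply, h_edist] using tendsto_iff_edist_tendsto_0.1 hL

theorem IsTruncSol.graphOn_subset {H : Euc n → Set (Euc n)} {C : Set (Euc n)} {T ε : ℝ}
    {z₀ : Euc n} {T' : ℝ} {z : ℝ → Euc n} (h : IsTruncSol H C T ε z₀ T' z) :
    graphOn T' z ⊆ Icc 0 T ×ˢ closedBall z₀ ε := by
  obtain ⟨-, hT'T, -, -, hball, -⟩ := h
  rintro p ⟨ht, hp⟩
  rw [mem_prod, hp]
  exact ⟨⟨ht.1, ht.2.trans hT'T⟩, by simpa [dist_eq_norm] using hball p.1 ht⟩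

theorem stmt9_general {n : ℕ} (Z : Set (Euc n))
    (f : Euc n → Euc n → Euc n)
    (Ginv : Euc n → EucOp n)
    (z₀ : Euc n)
    (ε : ℝ)
    (T : ℝ)
    (K : ℕ → ℝ)
    (T' : ℕ → ℝ) (z : ℕ → ℝ → Euc n)
    (hsol : ∀ i, IsTruncSol (AWA f Ginv Z (K i)) Set.univ T ε z₀ (T' i) (z i)) :
    ∃ φ : ℕ → ℕ, StrictMono φ ∧ ∃ L : Set (ℝ × Euc n),
      KuratowskiTendsto (fun i => graphOn (T' (φ i)) (z (φ i))) L :=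
  exists_subseq_kuratowskiTendsto_of_subset_isCompact
    (isCompact_Icc.prod (isCompact_closedBall z₀ ε)) fun i => (hsol i).graphOn_subset

/-- cf. Lemma 4.1: any sequence of `(T, ε)`-truncated solutions of the
anti-windup approximations with gains `Kₙ → 0⁺` has a graphically convergent subsequence. -/
theorem stmt9 {n : ℕ} (Z : Set (Euc n)) (hZcl : IsClosed Z)
    (f : Euc n → Euc n → Euc n)
    (hf : ContinuousOn (fun p : Euc n × Euc n => f p.1 p.2) (Set.univ ×ˢ Z))
    (G Ginv : Euc n → EucOp n) (hG : IsMetricOn Z G) (hGinv : ContinuousOn Ginv Z)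
    (hInv : InverseOn G Ginv Z)
    (z₀ : Euc n) (hz₀ : z₀ ∈ Z)
    (M ν μ α ε : ℝ) (hloc : LocalAssumption Z f Ginv z₀ M ν μ α ε)
    (T : ℝ) (hT : 0 < T)
    (K : ℕ → ℝ) (hKpos : ∀ i, 0 < K i) (hKlim : Filter.Tendsto K Filter.atTop (nhds 0))
    (T' : ℕ → ℝ) (z : ℕ → ℝ → Euc n)
    (hsol : ∀ i, IsTruncSol (AWA f Ginv Z (K i)) Set.univ T ε z₀ (T' i) (z i)) :
    ∃ φ : ℕ → ℕ, StrictMono φ ∧ ∃ L : Set (ℝ × Euc n),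
      KuratowskiTendsto (fun i => graphOn (T' (φ i)) (z (φ i))) L :=
  stmt9_general Z f Ginv z₀ ε T K T' z hsol
end
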